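/- Let A and A* be linear maps from ℝⁿ to ℝᵐ such that A*ᵀA* is invertible with ‖(A*ᵀA*)⁻¹‖ ≤ B and ‖A*‖ ≤ α, and set δ = ‖A − A*‖. If B(2α + δ)δ < 1, then AᵀA is invertible and ‖(AᵀA)⁻¹‖ ≤ B / (1 − B(2α + δ)δ). -/

import Mathlib

/-!
Write `M = A†A` and `M⋆ = A⋆†A⋆`. Then `M - M⋆ = A† (A - A⋆) + (A - A⋆)† A⋆`, so
`‖M - M⋆‖ ≤ (2α + δ)δ`, and the Banach lemma applies to `M = M⋆ (1 - M⋆⁻¹ (M⋆ - M))`.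
The bound on `‖M⁻¹‖` comes from the resolvent identity `M⁻¹ = M⋆⁻¹ + M⋆⁻¹ (M⋆ - M) M⁻¹`.
-/

section BanachLemma

variable {R : Type*} [NormedRing R] [CompleteSpace R] {a b : R} {B ε : ℝ}

theorem IsUnit.isUnit_of_norm_inverse_mul_sub_lt_one (ha : IsUnit a)
    (h : ‖Ring.inverse a * (a - b)‖ < 1) : IsUnit b := by
  have hfactor : b = a * (1 - Ring.inverse a * (a - b)) := by
    rw [mul_sub, mul_one, Ring.mul_inverse_cancel_left a _ ha, sub_sub_cancel]
  rw [hfactor]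
  exact ha.mul (isUnit_one_sub_of_norm_lt_one h)

theorem IsUnit.isUnit_and_norm_inverse_le_of_norm_sub_le (ha : IsUnit a)
    (hB : ‖Ring.inverse a‖ ≤ B) (hε : ‖b - a‖ ≤ ε) (hsmall : B * ε < 1) :
    IsUnit b ∧ ‖Ring.inverse b‖ ≤ B / (1 - B * ε) := by
  have hB0 : 0 ≤ B := (norm_nonneg _).trans hB
  have hdiff : ‖Ring.inverse a * (a - b)‖ ≤ B * ε := by
    rw [norm_sub_rev] at hε
    exact (norm_mul_le _ _).trans (mul_le_mul hB hε (norm_nonneg _) hB0)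
  have hb : IsUnit b := ha.isUnit_of_norm_inverse_mul_sub_lt_one (hdiff.trans_lt hsmall)
  refine ⟨hb, ?_⟩
  have hresolvent :
      Ring.inverse a * (a - b) * Ring.inverse b = Ring.inverse b - Ring.inverse a := by
    rw [mul_sub, sub_mul, Ring.inverse_mul_cancel a ha, one_mul, mul_assoc,
      Ring.mul_inverse_cancel b hb, mul_one]
  have hrec : ‖Ring.inverse b‖ ≤ B + B * ε * ‖Ring.inverse b‖ :=
    calc ‖Ring.inverse b‖
        = ‖Ring.inverse a + Ring.inverse a * (a - b) * Ring.inverse b‖ := by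
          rw [hresolvent, add_sub_cancel]
      _ ≤ ‖Ring.inverse a‖ + ‖Ring.inverse a * (a - b)‖ * ‖Ring.inverse b‖ :=
          (norm_add_le _ _).trans (by gcongr; exact norm_mul_le _ _)
      _ ≤ B + B * ε * ‖Ring.inverse b‖ := by gcongr
  rw [le_div_iff₀ (by linarith)]
  linarith

end BanachLemma

section NormalOperator

variable {𝕜 E F : Type*} [RCLike 𝕜] [NormedAddCommGroup E] [InnerProductSpace 𝕜 E]
  [CompleteSpace E] [NormedAddCommGroup F] [InnerProductSpace 𝕜 F] [CompleteSpace F]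

open ContinuousLinearMap

theorem adjoint_comp_self_sub_adjoint_comp_self (A A' : E →L[𝕜] F) :
    adjoint A ∘L A - adjoint A' ∘L A' = adjoint A ∘L (A - A') + adjoint (A - A') ∘L A' := by
  rw [map_sub, comp_sub, sub_comp]
  abel

theorem norm_adjoint_comp_self_sub_le (A A' : E →L[𝕜] F) :
    ‖adjoint A ∘L A - adjoint A' ∘L A'‖ ≤ (2 * ‖A'‖ + ‖A - A'‖) * ‖A - A'‖ := by
  have hA : ‖A‖ ≤ ‖A'‖ + ‖A - A'‖ := norm_le_insert' A A'
  rw [adjoint_comp_self_sub_adjoint_comp_self]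
  calc ‖adjoint A ∘L (A - A') + adjoint (A - A') ∘L A'‖
      ≤ ‖adjoint A‖ * ‖A - A'‖ + ‖adjoint (A - A')‖ * ‖A'‖ :=
        (norm_add_le _ _).trans (add_le_add (opNorm_comp_le _ _) (opNorm_comp_le _ _))
    _ = ‖A‖ * ‖A - A'‖ + ‖A - A'‖ * ‖A'‖ := by
        rw [LinearIsometryEquiv.norm_map, LinearIsometryEquiv.norm_map]
    _ ≤ (‖A'‖ + ‖A - A'‖) * ‖A - A'‖ + ‖A - A'‖ * ‖A'‖ := by gcongr
    _ = (2 * ‖A'‖ + ‖A - A'‖) * ‖A - A'‖ := by ring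

end NormalOperator

/-- Banach-lemma type invertibility of the perturbed normal operator
`AᵀA`, with the bound `‖(AᵀA)⁻¹‖ ≤ B / (1 - B(2α + δ)δ)` where `δ = ‖A - A*‖`. -/
theorem normal_operator_invertible_of_perturbation
    {n m : ℕ}
    (A Astar : EuclideanSpace ℝ (Fin n) →L[ℝ] EuclideanSpace ℝ (Fin m))
    (B α : ℝ)
    (hUnit : IsUnit ((ContinuousLinearMap.adjoint Astar).comp Astar))
    (hB : ‖Ring.inverse ((ContinuousLinearMap.adjoint Astar).comp Astar)‖ ≤ B)
    (hα : ‖Astar‖ ≤ α)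
    (hsmall : B * (2 * α + ‖A - Astar‖) * ‖A - Astar‖ < 1) :
    IsUnit ((ContinuousLinearMap.adjoint A).comp A) ∧
      ‖Ring.inverse ((ContinuousLinearMap.adjoint A).comp A)‖ ≤
        B / (1 - B * (2 * α + ‖A - Astar‖) * ‖A - Astar‖) := by
  have hperturb : ‖(ContinuousLinearMap.adjoint A).comp A
      - (ContinuousLinearMap.adjoint Astar).comp Astar‖ ≤
        (2 * α + ‖A - Astar‖) * ‖A - Astar‖ :=
    (norm_adjoint_comp_self_sub_le A Astar).trans (by gcongr)
  rw [mul_assoc] at hsmall ⊢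
  exact hUnit.isUnit_and_norm_inverse_le_of_norm_sub_le hB hperturb hsmall
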